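/- Let n ≥ 1 and let γ : ℝ → ℝ^{n+1} be a smooth curve with ‖γ(s)‖ = 1 and ‖γ'(s)‖ = 1 for all s ∈ ℝ. For a smooth map X : ℝ → ℝ^{n+1}, set (D X)(s) = X'(s) − ⟨X'(s), γ(s)⟩ γ(s). Then for all s ∈ ℝ, D(D(D γ'))(s) + (D γ')(s) = γ''''(s) + 2 γ''(s) + (2 − ‖γ''(s)‖²) γ(s). In particular, γ is a biharmonic curve of the unit sphere Sⁿ if and only if γ'''' + 2γ'' + (2 − ‖γ''‖²)γ = 0 identically. -/

import Mathlib

open scoped RealInnerProductSpace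

noncomputable def sphereCovD {m : ℕ} (γ X : ℝ → EuclideanSpace ℝ (Fin m)) :
    ℝ → EuclideanSpace ℝ (Fin m) := fun s =>
  deriv X s - ⟪deriv X s, γ s⟫ • γ s

private lemma deriv_inner_const {m : ℕ} {f g : ℝ → EuclideanSpace ℝ (Fin m)} {c : ℝ}
    (hf : Differentiable ℝ f) (hg : Differentiable ℝ g)
    (h : ∀ s, ⟪f s, g s⟫ = c) (s : ℝ) :
    ⟪f s, deriv g s⟫ + ⟪deriv f s, g s⟫ = 0 := by
  have h0 : deriv (fun s => ⟪f s, g s⟫) s = 0 := by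
    rw [funext h]; simp
  rwa [deriv_inner_apply (𝕜 := ℝ) (hf s) (hg s)] at h0

/-- For a smooth unit-speed curve `γ` on the unit sphere `Sⁿ ⊂ ℝ^{n+1}`, the
biharmonic tension `D(D(D γ'))(s) + (D γ')(s)` equals
`γ''''(s) + 2 γ''(s) + (2 − ‖γ''(s)‖²) γ(s)`; in particular `γ` is a biharmonic curve of
`Sⁿ` if and only if `γ'''' + 2γ'' + (2 − ‖γ''‖²)γ = 0` identically. -/
theorem sphere_biharmonic_curve_equation (n : ℕ) (hn : 1 ≤ n)
    (γ : ℝ → EuclideanSpace ℝ (Fin (n + 1)))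
    (hsmooth : ContDiff ℝ (⊤ : ℕ∞) γ)
    (hsphere : ∀ s : ℝ, ‖γ s‖ = 1)
    (hunit : ∀ s : ℝ, ‖deriv γ s‖ = 1) :
    (∀ s : ℝ,
      sphereCovD γ (sphereCovD γ (sphereCovD γ (deriv γ))) s + sphereCovD γ (deriv γ) s
        = iteratedDeriv 4 γ s + (2 : ℝ) • iteratedDeriv 2 γ s
          + (2 - ‖iteratedDeriv 2 γ s‖ ^ 2) • γ s) ∧
    ((∀ s : ℝ,
        sphereCovD γ (sphereCovD γ (sphereCovD γ (deriv γ))) s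
          + sphereCovD γ (deriv γ) s = 0) ↔
      (∀ s : ℝ,
        iteratedDeriv 4 γ s + (2 : ℝ) • iteratedDeriv 2 γ s
          + (2 - ‖iteratedDeriv 2 γ s‖ ^ 2) • γ s = 0)) := by
  have hsm : ContDiff ℝ ((⊤ : ℕ∞) : WithTop ℕ∞) γ := hsmooth.of_le (by simp)
  have hdk : ∀ k : ℕ, Differentiable ℝ (iteratedDeriv k γ) := by
    intro k
    rw [iteratedDeriv_eq_iterate]
    exact (hsm.iterate_deriv k).differentiable (by simp)
  have hd0 : Differentiable ℝ γ := by simpa using hdk 0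
  have hd1 : Differentiable ℝ (deriv γ) := by
    simpa [iteratedDeriv_one] using hdk 1
  have hd2 : Differentiable ℝ (iteratedDeriv 2 γ) := hdk 2
  have hd3 : Differentiable ℝ (iteratedDeriv 3 γ) := hdk 3
  have hder : ∀ k : ℕ, deriv (iteratedDeriv k γ) = iteratedDeriv (k + 1) γ :=
    fun k => (iteratedDeriv_succ).symm
  have hder1 : deriv (deriv γ) = iteratedDeriv 2 γ := by
    have h := hder 1
    rwa [iteratedDeriv_one] at h
  -- inner product identities
  have c0 : ∀ s, ⟪γ s, γ s⟫ = (1 : ℝ) := by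
    intro s
    rw [real_inner_self_eq_norm_sq, hsphere s]; norm_num
  have c1 : ∀ s, ⟪deriv γ s, γ s⟫ = (0 : ℝ) := by
    intro s
    have := deriv_inner_const hd0 hd0 c0 s
    have hc := real_inner_comm (deriv γ s) (γ s)
    linarith
  have c11 : ∀ s, ⟪deriv γ s, deriv γ s⟫ = (1 : ℝ) := by
    intro s
    rw [real_inner_self_eq_norm_sq, hunit s]; norm_num
  have c2g : ∀ s, ⟪iteratedDeriv 2 γ s, γ s⟫ = (-1 : ℝ) := by
    intro s
    have := deriv_inner_const hd1 hd0 c1 s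
    rw [hder1] at this
    have hc := real_inner_comm (iteratedDeriv 2 γ s) (γ s)
    have h11 := c11 s
    linarith
  have c21 : ∀ s, ⟪iteratedDeriv 2 γ s, deriv γ s⟫ = (0 : ℝ) := by
    intro s
    have := deriv_inner_const hd1 hd1 c11 s
    rw [hder1] at this
    have hc := real_inner_comm (iteratedDeriv 2 γ s) (deriv γ s)
    linarith
  have c3g : ∀ s, ⟪iteratedDeriv 3 γ s, γ s⟫ = (0 : ℝ) := by
    intro s
    have := deriv_inner_const hd2 hd0 c2g s
    rw [hder 2] at this
    have hc := real_inner_comm (iteratedDeriv 2 γ s) (deriv γ s)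
    have h21 := c21 s
    have hc2 := real_inner_comm (iteratedDeriv 3 γ s) (γ s)
    linarith
  have c31 : ∀ s, ⟪iteratedDeriv 3 γ s, deriv γ s⟫
      = -⟪iteratedDeriv 2 γ s, iteratedDeriv 2 γ s⟫ := by
    intro s
    have := deriv_inner_const hd2 hd1 c21 s
    rw [hder 2, hder1] at this
    have hc := real_inner_comm (iteratedDeriv 3 γ s) (deriv γ s)
    linarith
  have c4g : ∀ s, ⟪iteratedDeriv 4 γ s, γ s⟫
      = ⟪iteratedDeriv 2 γ s, iteratedDeriv 2 γ s⟫ := by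
    intro s
    have := deriv_inner_const hd3 hd0 c3g s
    rw [hder 3] at this
    have h31 := c31 s
    have hc := real_inner_comm (iteratedDeriv 3 γ s) (deriv γ s)
    have hc2 := real_inner_comm (iteratedDeriv 4 γ s) (γ s)
    linarith
  -- Step A: D γ' = γ'' + γ
  have hA : sphereCovD γ (deriv γ) = fun s => iteratedDeriv 2 γ s + γ s := by
    funext s
    simp only [sphereCovD, hder1, c2g s]
    module
  -- Step B
  have hB : sphereCovD γ (sphereCovD γ (deriv γ))
      = fun s => iteratedDeriv 3 γ s + deriv γ s := by
    funext s
    have hdA : deriv (sphereCovD γ (deriv γ)) s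
        = iteratedDeriv 3 γ s + iteratedDeriv 1 γ s := by
      rw [hA, deriv_fun_add (hd2 s) (hd0 s), hder 2]
      simp [iteratedDeriv_one]
    simp only [sphereCovD, hdA, iteratedDeriv_one, inner_add_left, c3g s, c1 s]
    module
  -- Step C
  have hC : sphereCovD γ (sphereCovD γ (sphereCovD γ (deriv γ)))
      = fun s => iteratedDeriv 4 γ s + iteratedDeriv 2 γ s
          - (⟪iteratedDeriv 2 γ s, iteratedDeriv 2 γ s⟫ - 1) • γ s := by
    funext s
    have hdB : deriv (sphereCovD γ (sphereCovD γ (deriv γ))) s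
        = iteratedDeriv 4 γ s + iteratedDeriv 2 γ s := by
      rw [hB, deriv_fun_add (hd3 s) (hd1 s), hder 3, hder1]
    simp only [sphereCovD, hdB, inner_add_left, c4g s, c2g s]
    module
  have key : ∀ s : ℝ,
      sphereCovD γ (sphereCovD γ (sphereCovD γ (deriv γ))) s + sphereCovD γ (deriv γ) s
        = iteratedDeriv 4 γ s + (2 : ℝ) • iteratedDeriv 2 γ s
          + (2 - ‖iteratedDeriv 2 γ s‖ ^ 2) • γ s := by
    intro s
    have hin : ⟪iteratedDeriv 2 γ s, iteratedDeriv 2 γ s⟫ = ‖iteratedDeriv 2 γ s‖ ^ 2 :=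
      real_inner_self_eq_norm_sq _
    rw [hC]
    simp only [hA, hin]
    module
  refine ⟨key, ?_⟩
  constructor
  · intro h s; rw [← key s]; exact h s
  · intro h s; rw [key s]; exact h s
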